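/- arXiv:math/0603322 — 2 statements merged into one kernel-verified Lean document; each statement's English description precedes it below -/
import Mathlib

section
/- Let A be a bounded operator on ℓ²(ℤ) that is a finite product A = L(a₁) b₁ L(a₂) b₂ ⋯ L(a_k) b_k, where each L(a_i) is a bounded Laurent operator (bi-infinite Toeplitz matrix) and each b_i is the operator of multiplication by an almost periodic function on ℤ. Then the main diagonal D(A) of A is an almost periodic function on ℤ. -/
noncomputable section

/-- The Hilbert space `ℓ²(ℤ)`. -/
abbrev HZ : Type := lp (fun _ : ℤ => ℂ) 2

/-- The standard orthonormal basis of `ℓ²(ℤ)`. -/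
def eZ (i : ℤ) : HZ := lp.single 2 i 1

/-- The translate `a_k`, `a_k (n) = a (n + k)`, of a bounded function on `ℤ`. -/
def shiftBCF (a : BoundedContinuousFunction ℤ ℂ) (k : ℤ) : BoundedContinuousFunction ℤ ℂ :=
  a.compContinuous ⟨fun n => n + k, continuous_of_discreteTopology⟩

/-- A bounded function on `ℤ` is almost periodic if its set of translates is
relatively compact in `ℓ^∞(ℤ)`. -/
def AlmostPeriodic (a : BoundedContinuousFunction ℤ ℂ) : Prop :=
  IsCompact (closure (Set.range (shiftBCF a)))


/-!
Let `U_n x = x (· + n)` be translation on `ℓ²(ℤ)`. Laurent operators commute with `U_n`, and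
`U_n b = b(· + n) U_n` for a multiplication operator, so `U_n A = A_n U_n`, where `A_n` is the
product with every `b_t` replaced by its translate. Hence `D(A)(· + n) = D(A_n) = Ψ(b(· + n))`
for the norm-continuous map `Ψ c = D(∏ L(a_t) c_t)`, and the translates of `D(A)` lie in the
compact image under `Ψ` of the product of the closures of the translates of the `b_t`.
-/
open scoped BoundedContinuousFunction ENNReal lp InnerProductSpace

namespace HilbertBasis

variable {ι ι' 𝕜 E : Type*} [RCLike 𝕜] [NormedAddCommGroup E] [InnerProductSpace 𝕜 E]

def reindex [CompleteSpace E] (b : HilbertBasis ι 𝕜 E) (e : ι' ≃ ι) : HilbertBasis ι' 𝕜 E :=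
  HilbertBasis.mk (b.orthonormal.comp e e.injective)
    (by rw [e.surjective.range_comp, b.dense_span])

@[simp]
theorem coe_reindex [CompleteSpace E] (b : HilbertBasis ι 𝕜 E) (e : ι' ≃ ι) :
    ⇑(b.reindex e) = b ∘ e :=
  HilbertBasis.coe_mk _ _

theorem default_apply [DecidableEq ι] (i : ι) :
    (default : HilbertBasis ι 𝕜 ℓ²(ι, 𝕜)) i = lp.single 2 i 1 :=
  (HilbertBasis.repr_symm_single default i).symm

def diagonal [TopologicalSpace ι] [DiscreteTopology ι] (b : HilbertBasis ι 𝕜 E) :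
    (E →L[𝕜] E) →L[𝕜] (ι →ᵇ 𝕜) :=
  have bound (P : E →L[𝕜] E) (i : ι) : ‖⟪b i, P (b i)⟫_𝕜‖ ≤ ‖P‖ :=
    calc ‖⟪b i, P (b i)⟫_𝕜‖ ≤ ‖b i‖ * ‖P (b i)‖ := norm_inner_le_norm _ _
      _ ≤ ‖b i‖ * (‖P‖ * ‖b i‖) := by gcongr; exact P.le_opNorm _
      _ = ‖P‖ := by rw [b.orthonormal.1 i]; ring
  LinearMap.mkContinuous
    { toFun P := .ofNormedAddCommGroupDiscrete (fun i => ⟪b i, P (b i)⟫_𝕜) ‖P‖ (bound P)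
      map_add' P Q := by ext; simp [inner_add_right]
      map_smul' c P := by ext; simp [inner_smul_right] }
    1 fun P => by
      rw [one_mul]
      exact (BoundedContinuousFunction.norm_le (norm_nonneg P)).2 (bound P)

@[simp]
theorem diagonal_apply [TopologicalSpace ι] [DiscreteTopology ι] (b : HilbertBasis ι 𝕜 E)
    (P : E →L[𝕜] E) (i : ι) : b.diagonal P i = ⟪b i, P (b i)⟫_𝕜 :=
  rfl

end HilbertBasis

namespace lp

variable {G 𝕜 : Type*} [AddCommGroup G] [RCLike 𝕜]

/-- Coordinates in the standard basis reindexed by `· + g`: the translation `x ↦ x (· + g)`,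
unitary by construction. -/
def translate (g : G) : ℓ²(G, 𝕜) →L[𝕜] ℓ²(G, 𝕜) :=
  ((default : HilbertBasis G 𝕜 ℓ²(G, 𝕜)).reindex (Equiv.addRight g)).repr.toContinuousLinearEquiv

theorem translate_apply (g : G) (x : ℓ²(G, 𝕜)) (m : G) : translate g x m = x (m + g) := by
  classical
  simp [translate, HilbertBasis.repr_apply_apply, HilbertBasis.default_apply,
    lp.inner_single_left]

theorem translate_single [DecidableEq G] (g i : G) (a : 𝕜) :
    translate g (lp.single 2 i a) = lp.single 2 (i - g) a := by
  ext m
  simp only [translate_apply, lp.single_apply, Pi.single_apply, eq_sub_iff_add_eq]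

theorem commute_translate_of_inner_single [DecidableEq G] {L : ℓ²(G, 𝕜) →L[𝕜] ℓ²(G, 𝕜)}
    {a : G → 𝕜}
    (hL : ∀ i j, ⟪lp.single 2 i 1, L (lp.single 2 j 1)⟫_𝕜 = a (i - j)) (g : G) :
    Commute (translate g) L := by
  have hL' (i j : G) : L (lp.single 2 j 1) i = a (i - j) := by
    simpa [lp.inner_single_left] using hL i j
  refine lp.ext_continuousLinearMap ENNReal.ofNat_ne_top fun j => ?_
  refine ContinuousLinearMap.ext_ring (lp.ext (funext fun m => ?_))
  simp only [ContinuousLinearMap.comp_apply, ContinuousLinearMap.mul_def,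
    lp.singleContinuousLinearMap_apply, translate_single, translate_apply, hL']
  congr 1
  abel

end lp

namespace BoundedContinuousFunction

variable {α 𝕜 : Type*} [TopologicalSpace α] [DiscreteTopology α] [RCLike 𝕜]

def mulLp (p : ℝ≥0∞) [Fact (1 ≤ p)] :
    (α →ᵇ 𝕜) →L[𝕜] lp (fun _ : α => 𝕜) p →L[𝕜] lp (fun _ : α => 𝕜) p :=
  (lp.holderL p (fun _ => ContinuousLinearMap.mul 𝕜 𝕜) (K := 1)
    fun _ => ContinuousLinearMap.opNorm_mul_le 𝕜 𝕜).comp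
    (lpBCFₗᵢ 𝕜 𝕜).symm.toContinuousLinearEquiv.toContinuousLinearMap

theorem mulLp_apply (p : ℝ≥0∞) [Fact (1 ≤ p)] (c : α →ᵇ 𝕜)
    (x : lp (fun _ : α => 𝕜) p) (m : α) : c.mulLp p x m = c m * x m :=
  rfl

end BoundedContinuousFunction

theorem SemiconjBy.list_prod_ofFn {M : Type*} [Monoid M] {a : M} :
    ∀ {k : ℕ} {f g : Fin k → M}, (∀ t, SemiconjBy a (f t) (g t)) →
      SemiconjBy a (List.ofFn f).prod (List.ofFn g).prod
  | 0, _, _, _ => by simp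
  | _ + 1, _, _, h => by
    simpa only [List.ofFn_succ, List.prod_cons] using
      (h 0).mul_right (list_prod_ofFn fun t => h t.succ)

theorem AlmostPeriodic.of_shiftBCF_eq {ι : Type*} {b : ι → ℤ →ᵇ ℂ}
    (hb : ∀ t, AlmostPeriodic (b t)) {Ψ : (ι → ℤ →ᵇ ℂ) → ℤ →ᵇ ℂ} (hΨ : Continuous Ψ)
    {d : ℤ →ᵇ ℂ} (hd : ∀ n, shiftBCF d n = Ψ fun t => shiftBCF (b t) n) :
    AlmostPeriodic d := by
  have hK : IsCompact (Ψ '' Set.univ.pi fun t => closure (Set.range (shiftBCF (b t)))) :=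
    (isCompact_univ_pi hb).image hΨ
  refine hK.of_isClosed_subset isClosed_closure (closure_minimal ?_ hK.isClosed)
  rintro _ ⟨n, rfl⟩
  exact ⟨_, fun t _ => subset_closure ⟨n, rfl⟩, (hd n).symm⟩

theorem semiconjBy_translate_mulLp (c : ℤ →ᵇ ℂ) (n : ℤ) :
    SemiconjBy (lp.translate n) (c.mulLp 2) ((shiftBCF c n).mulLp 2) := by
  ext x m
  simp only [ContinuousLinearMap.mul_def, ContinuousLinearMap.comp_apply, lp.translate_apply,
    BoundedContinuousFunction.mulLp_apply]
  rfl

theorem shiftBCF_diagonal_of_semiconjBy {P Q : HZ →L[ℂ] HZ} {n : ℤ}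
    (h : SemiconjBy (lp.translate n) P Q) :
    shiftBCF ((default : HilbertBasis ℤ ℂ HZ).diagonal P) n =
      (default : HilbertBasis ℤ ℂ HZ).diagonal Q := by
  ext i
  have hQ : Q (lp.single 2 i 1) = lp.translate n (P (lp.single 2 (i + n) 1)) := by
    simpa [lp.translate_single] using (DFunLike.congr_fun h.eq (lp.single 2 (i + n) 1)).symm
  simp [shiftBCF, HilbertBasis.default_apply, lp.inner_single_left, hQ, lp.translate_apply]

/-- Let `A = L(a₁) b₁ L(a₂) b₂ ⋯ L(a_k) b_k` be a finite product of
bounded Laurent operators `L(a_t)` (bi-infinite Toeplitz matrices, with entries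
`⟨L(a_t) e_j, e_i⟩ = (a_t)_{i-j}`) and operators `b_t` of multiplication by almost
periodic functions on `ℤ`.  Then the main diagonal `D(A) = (⟨A e_i, e_i⟩)_{i∈ℤ}` of
`A` is an almost periodic function on `ℤ`. -/
theorem diag_of_laurent_ap_product_almostPeriodic
    (k : ℕ)
    (L M : Fin k → (HZ →L[ℂ] HZ))
    (aL : Fin k → ℤ → ℂ)
    (b : Fin k → BoundedContinuousFunction ℤ ℂ)
    (hL : ∀ (t : Fin k) (i j : ℤ), (inner ℂ (eZ i) (L t (eZ j)) : ℂ) = aL t (i - j))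
    (hM : ∀ (t : Fin k) (x : HZ) (m : ℤ), (M t x : ∀ _ : ℤ, ℂ) m = b t m * x m)
    (hb : ∀ t, AlmostPeriodic (b t))
    (A : HZ →L[ℂ] HZ)
    (hA : A = (List.ofFn fun t => L t * M t).prod) :
    ∃ d : BoundedContinuousFunction ℤ ℂ,
      (∀ i : ℤ, d i = inner ℂ (eZ i) (A (eZ i))) ∧ AlmostPeriodic d := by
  have hM' (t : Fin k) : M t = (b t).mulLp 2 :=
    ContinuousLinearMap.ext fun x => lp.ext (funext (hM t x))
  let D := (default : HilbertBasis ℤ ℂ HZ).diagonal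
  refine ⟨D A, fun i => by simp [D, eZ, HilbertBasis.default_apply], ?_⟩
  have hΨ : Continuous fun c : Fin k → ℤ →ᵇ ℂ =>
      D (List.ofFn fun t => L t * (c t).mulLp 2).prod :=
    D.continuous.comp <| by
      simp only [List.ofFn_eq_map]
      exact continuous_list_prod _ fun t _ => by fun_prop
  refine AlmostPeriodic.of_shiftBCF_eq hb hΨ fun n => ?_
  rw [hA, funext hM']
  exact shiftBCF_diagonal_of_semiconjBy (SemiconjBy.list_prod_ofFn fun t =>
    SemiconjBy.mul_right (lp.commute_translate_of_inner_single (hL t) n)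
      (semiconjBy_translate_mulLp (b t) n))
end
end

section
/- Let A be a bounded operator on a Hilbert space H and P an orthogonal projection on H, and suppose A is invertible. Then the compression PAP : im P → im P is invertible if and only if (I−P)A^{−1}(I−P) : im(I−P) → im(I−P) is invertible (Kozak's identity). -/
/-!
A compression `e * a * e` by an idempotent `e` is invertible on the range of `e` exactly when it
is a unit of the corner ring `e R e`, and the embedding `x ↦ x + (1 - e)` of the corner into `R`
turns this into the condition `IsUnit (e * a * e + (1 - e))`. If `c` inverts `e * a * e` in the
corner, the Schur complement `(1 - e) * (a - a * c * a) * (1 - e)` inverts the compression of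
`b = a⁻¹` by `1 - e`: the identities `b * (1 - e) * (a - a * c * a) = 1 - c * a` and
`(a - a * c * a) * (1 - e) * b = 1 - a * c` reduce this to `(1 - e) * c = 0 = c * (1 - e)`.
Exchanging `(e, a)` with `(1 - e, b)` gives the converse.
-/

section

variable {R : Type*} [Ring R] {a b c e : R}

lemma mul_one_sub_mul_sub_mul_mul (hba : b * a = 1) (heac : e * a * c = e) :
    b * (1 - e) * (a - a * c * a) = 1 - c * a :=
  calc b * (1 - e) * (a - a * c * a)
      = b * a - b * a * c * a - b * e * a + b * (e * a * c) * a := by noncomm_ring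
    _ = 1 - c * a := by rw [hba, heac]; noncomm_ring

lemma sub_mul_mul_one_sub_mul (hab : a * b = 1) (hcae : c * a * e = e) :
    (a - a * c * a) * (1 - e) * b = 1 - a * c :=
  calc (a - a * c * a) * (1 - e) * b
      = a * b - a * c * (a * b) - a * e * b + a * (c * a * e) * b := by noncomm_ring
    _ = 1 - a * c := by rw [hab, hcae]; noncomm_ring

end

namespace IsIdempotentElem

variable {R : Type*} [Ring R] {e : R} (he : IsIdempotentElem e)

lemma mul_corner_val (x : he.Corner) : e * x.1 = x.1 :=
  ((Subsemigroup.mem_corner_iff he).1 x.2).1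

lemma corner_val_mul (x : he.Corner) : x.1 * e = x.1 :=
  ((Subsemigroup.mem_corner_iff he).1 x.2).2

def compress (a : R) : he.Corner := ⟨e * a * e, a, rfl⟩

lemma compress_mul_compress (a b : R) : he.compress a * he.compress b = he.compress (a * e * b) :=
  Subtype.ext <| by
    change e * a * e * (e * b * e) = e * (a * e * b) * e
    rw [show e * a * e * (e * b * e) = e * a * (e * e) * b * e by noncomm_ring, he.eq]
    noncomm_ring

lemma compress_one_sub {x : R} (hx : e * x * e = 0) : he.compress (1 - x) = 1 :=
  Subtype.ext <| by
    change e * (1 - x) * e = e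
    rw [mul_sub, sub_mul, mul_one, he.eq, hx, sub_zero]

def addOneSubMonoidHom : he.Corner →* R where
  toFun x := x.1 + (1 - e)
  map_one' := add_sub_cancel _ _
  map_mul' x y := by
    change x.1 * y.1 + (1 - e) = (x.1 + (1 - e)) * (y.1 + (1 - e))
    have hx : x.1 * (1 - e) = 0 := by rw [mul_sub, mul_one, he.corner_val_mul, sub_self]
    have hy : (1 - e) * y.1 = 0 := by rw [sub_mul, one_mul, he.mul_corner_val, sub_self]
    rw [mul_add, add_mul, add_mul, hx, hy, he.one_sub.eq, add_zero, zero_add]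

include he in
lemma mul_mul_self_of_commute {v : R} (hv : Commute e v) : e * v * e = e * v := by
  rw [mul_assoc, ← hv.eq, ← mul_assoc, he.eq]

lemma isUnit_compress_of_commute (u : Rˣ) (hu : Commute e u) : IsUnit (he.compress u) := by
  have hu' : Commute e ↑u⁻¹ := hu.units_inv_right
  refine isUnit_iff_exists.2 ⟨he.compress ↑u⁻¹, Subtype.ext ?_, Subtype.ext ?_⟩
  · change e * u * e * (e * ↑u⁻¹ * e) = e
    rw [he.mul_mul_self_of_commute hu, he.mul_mul_self_of_commute hu', ← mul_assoc,
      he.mul_mul_self_of_commute hu, mul_assoc, u.mul_inv, mul_one]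
  · change e * ↑u⁻¹ * e * (e * u * e) = e
    rw [he.mul_mul_self_of_commute hu, he.mul_mul_self_of_commute hu', ← mul_assoc,
      he.mul_mul_self_of_commute hu', mul_assoc, u.inv_mul, mul_one]

include he in
lemma mul_compression_add_one_sub (a : R) : e * (e * a * e + (1 - e)) = e * a * e := by
  rw [mul_add, he.mul_one_sub_self, add_zero, ← mul_assoc, ← mul_assoc, he.eq]

include he in
lemma compression_add_one_sub_mul (a : R) : (e * a * e + (1 - e)) * e = e * a * e := by
  rw [add_mul, he.one_sub_mul_self, add_zero, mul_assoc, he.eq]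

lemma isUnit_compress_iff {a : R} : IsUnit (he.compress a) ↔ IsUnit (e * a * e + (1 - e)) := by
  refine ⟨(·.map he.addOneSubMonoidHom), fun ⟨u, hu⟩ => ?_⟩
  have hcomm : Commute e u := by
    rw [hu, Commute, SemiconjBy, he.mul_compression_add_one_sub, he.compression_add_one_sub_mul]
  have hcompress : he.compress u = he.compress a := Subtype.ext <| by
    change e * u * e = e * a * e
    rw [hu, he.mul_compression_add_one_sub, mul_assoc _ e e, he.eq]
  exact hcompress ▸ he.isUnit_compress_of_commute u hcomm

theorem isUnit_compress_one_sub_of_isUnit_compress {a b : R} (hab : a * b = 1) (hba : b * a = 1)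
    (h : IsUnit (he.compress a)) : IsUnit (he.one_sub.compress b) := by
  obtain ⟨c, hac, hca⟩ := isUnit_iff_exists.1 h
  have hec : e * c.1 = c.1 := he.mul_corner_val c
  have hce : c.1 * e = c.1 := he.corner_val_mul c
  have heac : e * a * c.1 = e := by
    have : e * a * e * c.1 = e := congrArg Subtype.val hac
    rwa [mul_assoc _ e, hec] at this
  have hcae : c.1 * a * e = e := by
    have : c.1 * (e * a * e) = e := congrArg Subtype.val hca
    rwa [← mul_assoc, ← mul_assoc, hce] at this
  have hfc : (1 - e) * c.1 = 0 := by rw [sub_mul, one_mul, hec, sub_self]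
  have hcf : c.1 * (1 - e) = 0 := by rw [mul_sub, mul_one, hce, sub_self]
  refine isUnit_iff_exists.2 ⟨he.one_sub.compress (a - a * c.1 * a), ?_, ?_⟩
  · rw [compress_mul_compress, mul_one_sub_mul_sub_mul_mul hba heac]
    exact he.one_sub.compress_one_sub (by rw [← mul_assoc, hfc, zero_mul, zero_mul])
  · rw [compress_mul_compress, sub_mul_mul_one_sub_mul hab hcae]
    exact he.one_sub.compress_one_sub (by rw [mul_assoc, mul_assoc, hcf, mul_zero, mul_zero])

include he in
theorem isUnit_compl_compression_of_isUnit_compression {a b : R} (hab : a * b = 1)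
    (hba : b * a = 1) (h : IsUnit (e * a * e + (1 - e))) :
    IsUnit ((1 - e) * b * (1 - e) + e) := by
  have := (he.one_sub.isUnit_compress_iff (a := b)).1
    (he.isUnit_compress_one_sub_of_isUnit_compress hab hba (he.isUnit_compress_iff.2 h))
  rwa [sub_sub_cancel] at this

end IsIdempotentElem

theorem kozak_identity_general {H : Type*} [NormedAddCommGroup H] [InnerProductSpace ℂ H]
    (A B P : H →L[ℂ] H)
    (hP_idem : P * P = P)
    (hAB : A * B = 1) (hBA : B * A = 1) :
    IsUnit (P * A * P + (1 - P)) ↔ IsUnit ((1 - P) * B * (1 - P) + P) := by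
  have hP : IsIdempotentElem P := hP_idem
  refine ⟨hP.isUnit_compl_compression_of_isUnit_compression hAB hBA, fun h => ?_⟩
  have := hP.one_sub.isUnit_compl_compression_of_isUnit_compression hBA hAB
    (by rwa [sub_sub_cancel])
  rwa [sub_sub_cancel] at this

/-- **Kozak's identity.** Let `A` be an invertible bounded operator on
a Hilbert space `H` (with inverse `B`) and `P` an orthogonal projection on `H`.  Then
the compression `P A P : im P → im P` is invertible if and only if
`(I-P) A⁻¹ (I-P) : im (I-P) → im (I-P)` is invertible.  (Compressions acting on the
range of a projection `P` are encoded, as usual, by adding the complementary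
projection: invertibility of `P A P` on `im P` is invertibility of `P A P + (I - P)`
on `H`.) -/
theorem kozak_identity {H : Type*} [NormedAddCommGroup H] [InnerProductSpace ℂ H]
    [CompleteSpace H]
    (A B P : H →L[ℂ] H)
    (hP_idem : P * P = P) (hP_sa : IsSelfAdjoint P)
    (hAB : A * B = 1) (hBA : B * A = 1) :
    IsUnit (P * A * P + (1 - P)) ↔ IsUnit ((1 - P) * B * (1 - P) + P) :=
  kozak_identity_general A B P hP_idem hAB hBA
end
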